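/- arXiv:0911.1846 — 2 statements merged into one kernel-verified Lean document; each statement's English description precedes it below -/
import Mathlib

section
/- Let α > 0 and let Ψ^α(r) = (1/2π)[K_0(r/α) + log r] for r > 0, where K_0 is the modified Bessel function of the second kind of order zero. Then its derivative DΨ^α(r) = (1/2π)[−(1/α)K_1(r/α) + 1/r] is bounded on (0,∞), with sup_{r>0} |DΨ^α(r)| ≤ C/α for an absolute constant C independent of α. -/
/-!
Substituting `u = sinh t` gives `1/s = ∫_0^∞ e^{-s sinh t} cosh t dt`, so `1/s - K₁(s)` is
the integral of `(e^{-s sinh t} - e^{-s cosh t}) cosh t ≥ 0`. Since `cosh t - sinh t = e^{-t}`,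
this integrand is at most `s e^{-t} cosh t · e^{-s sinh t} ≤ s e^{-st}`, whose integral is `1`.
Hence `|1/s - K₁(s)| ≤ 1`, and at `s = r/α` the derivative `DΨ^α(r)` is
`(1/(2πα)) (1/s - K₁(s))`.
-/

open MeasureTheory

/-- The modified Bessel function of the second kind of order one,
`K₁(r) = ∫_0^∞ exp(−r cosh t) cosh t dt`. -/
noncomputable def besselK1 (r : ℝ) : ℝ :=
  ∫ t in Set.Ioi (0 : ℝ), Real.exp (-r * Real.cosh t) * Real.cosh t

open Real Set Filter Topology

section LaplaceSubstitution

variable {f f' : ℝ → ℝ} {s a : ℝ}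

lemma hasDerivAt_neg_exp_neg_mul_comp_div (hs : 0 < s) {t : ℝ} (hf : HasDerivAt f (f' t) t) :
    HasDerivAt (fun t => -exp (-s * f t) / s) (exp (-s * f t) * f' t) t := by
  refine (((hf.const_mul (-s)).exp.neg).div_const s).congr_deriv ?_
  field_simp

lemma tendsto_neg_exp_neg_mul_comp_div (hs : 0 < s) (hft : Tendsto f atTop atTop) :
    Tendsto (fun t => -exp (-s * f t) / s) atTop (𝓝 0) := by
  have h := tendsto_exp_atBot.comp (hft.const_mul_atTop_of_neg (neg_neg_of_pos hs))
  simpa using h.neg.div_const s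

variable (hs : 0 < s) (hf : ∀ t ∈ Ici a, HasDerivAt f (f' t) t)
  (hf' : ∀ t ∈ Ioi a, 0 ≤ f' t) (hft : Tendsto f atTop atTop)
include hs hf hf' hft

lemma integrableOn_exp_neg_mul_comp_mul_deriv :
    IntegrableOn (fun t => exp (-s * f t) * f' t) (Ioi a) :=
  integrableOn_Ioi_deriv_of_nonneg'
    (fun t ht => hasDerivAt_neg_exp_neg_mul_comp_div hs (hf t ht))
    (fun t ht => mul_nonneg (exp_pos _).le (hf' t ht)) (tendsto_neg_exp_neg_mul_comp_div hs hft)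

lemma integral_exp_neg_mul_comp_mul_deriv :
    ∫ t in Ioi a, exp (-s * f t) * f' t = exp (-s * f a) / s := by
  rw [integral_Ioi_of_hasDerivAt_of_nonneg'
    (fun t ht => hasDerivAt_neg_exp_neg_mul_comp_div hs (hf t ht))
    (fun t ht => mul_nonneg (exp_pos _).le (hf' t ht)) (tendsto_neg_exp_neg_mul_comp_div hs hft)]
  ring

end LaplaceSubstitution

lemma Real.tendsto_sinh_atTop : Tendsto sinh atTop atTop :=
  tendsto_atTop_mono' _ (eventually_ge_atTop 0 |>.mono fun _ => self_le_sinh_iff.2) tendsto_id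

lemma Real.exp_sub_exp_le_mul_exp (x y : ℝ) : exp x - exp y ≤ (x - y) * exp x := by
  have h : exp x * (1 - (x - y)) ≤ exp x * exp (-(x - y)) :=
    mul_le_mul_of_nonneg_left (one_sub_le_exp_neg _) (exp_pos x).le
  rw [← exp_add, neg_sub, add_sub_cancel] at h
  linarith

lemma Real.exp_neg_mul_cosh_le_one {t : ℝ} (ht : 0 ≤ t) : exp (-t) * cosh t ≤ 1 := by
  have h : exp (-t) * exp (-t) ≤ 1 := by
    rw [← exp_add]; exact exp_le_one_iff.2 (by linarith)
  rw [cosh_eq, mul_div_assoc', mul_add, ← exp_add, neg_add_cancel, exp_zero]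
  linarith

variable {s : ℝ}

lemma integrableOn_exp_neg_mul_sinh_mul_cosh (hs : 0 < s) :
    IntegrableOn (fun t => exp (-s * sinh t) * cosh t) (Ioi 0) :=
  integrableOn_exp_neg_mul_comp_mul_deriv hs (fun t _ => hasDerivAt_sinh t)
    (fun t _ => (cosh_pos t).le) tendsto_sinh_atTop

lemma integral_exp_neg_mul_sinh_mul_cosh (hs : 0 < s) :
    ∫ t in Ioi 0, exp (-s * sinh t) * cosh t = 1 / s := by
  rw [integral_exp_neg_mul_comp_mul_deriv hs (fun t _ => hasDerivAt_sinh t)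
    (fun t _ => (cosh_pos t).le) tendsto_sinh_atTop, sinh_zero, mul_zero, exp_zero]

lemma exp_neg_mul_cosh_le_exp_neg_mul_sinh (hs : 0 ≤ s) (t : ℝ) :
    exp (-s * cosh t) ≤ exp (-s * sinh t) :=
  exp_le_exp.2 <| mul_le_mul_of_nonpos_left (sinh_lt_cosh t).le (neg_nonpos.2 hs)

lemma exp_neg_mul_sinh_sub_exp_neg_mul_cosh_mul_cosh_le (hs : 0 ≤ s) {t : ℝ} (ht : 0 ≤ t) :
    (exp (-s * sinh t) - exp (-s * cosh t)) * cosh t ≤ s * exp (-s * t) := by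
  have hexp := exp_sub_exp_le_mul_exp (-s * sinh t) (-s * cosh t)
  rw [show -s * sinh t - -s * cosh t = s * exp (-t) by rw [← cosh_sub_sinh]; ring] at hexp
  calc (exp (-s * sinh t) - exp (-s * cosh t)) * cosh t
      ≤ s * exp (-t) * exp (-s * sinh t) * cosh t := by gcongr
    _ = s * exp (-s * sinh t) * (exp (-t) * cosh t) := by ring
    _ ≤ s * exp (-s * t) * 1 := by
        have hsinh : exp (-s * sinh t) ≤ exp (-s * t) :=
          exp_le_exp.2 <| mul_le_mul_of_nonpos_left (self_le_sinh_iff.2 ht) (neg_nonpos.2 hs)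
        gcongr
        exact exp_neg_mul_cosh_le_one ht
    _ = s * exp (-s * t) := mul_one _

lemma integrableOn_besselK1_integrand (hs : 0 < s) :
    IntegrableOn (fun t => exp (-s * cosh t) * cosh t) (Ioi 0) := by
  refine (integrableOn_exp_neg_mul_sinh_mul_cosh hs).mono' (by fun_prop) ?_
  filter_upwards with t
  rw [norm_of_nonneg (by positivity)]
  exact mul_le_mul_of_nonneg_right (exp_neg_mul_cosh_le_exp_neg_mul_sinh hs.le t) (cosh_pos t).le

lemma inv_sub_besselK1_eq_integral (hs : 0 < s) :
    1 / s - besselK1 s = ∫ t in Ioi 0, (exp (-s * sinh t) - exp (-s * cosh t)) * cosh t := by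
  simp_rw [sub_mul]
  rw [integral_sub (integrableOn_exp_neg_mul_sinh_mul_cosh hs)
    (integrableOn_besselK1_integrand hs),
    integral_exp_neg_mul_sinh_mul_cosh hs, besselK1]

lemma abs_inv_sub_besselK1_le_one (hs : 0 < s) : |1 / s - besselK1 s| ≤ 1 := by
  have hnonneg : ∀ t ∈ Ioi (0 : ℝ), 0 ≤ (exp (-s * sinh t) - exp (-s * cosh t)) * cosh t :=
    fun t _ => mul_nonneg (sub_nonneg.2 (exp_neg_mul_cosh_le_exp_neg_mul_sinh hs.le t))
      (cosh_pos t).le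
  have hexp : ∫ t in Ioi (0 : ℝ), s * exp (-s * t) = 1 := by
    rw [integral_const_mul, integral_exp_mul_Ioi (neg_neg_of_pos hs)]
    simp [hs.ne']
  rw [inv_sub_besselK1_eq_integral hs,
    abs_of_nonneg (setIntegral_nonneg measurableSet_Ioi hnonneg), ← hexp]
  have hint : IntegrableOn (fun t => (exp (-s * sinh t) - exp (-s * cosh t)) * cosh t) (Ioi 0) :=
    ((integrableOn_exp_neg_mul_sinh_mul_cosh hs).sub
      (integrableOn_besselK1_integrand hs)).congr_fun (fun t _ => (sub_mul _ _ _).symm)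
      measurableSet_Ioi
  exact setIntegral_mono_on hint ((integrableOn_exp_mul_Ioi (neg_neg_of_pos hs) 0).const_mul s)
    measurableSet_Ioi fun t ht =>
      exp_neg_mul_sinh_sub_exp_neg_mul_cosh_mul_cosh_le hs.le (le_of_lt ht)

/-- the derivative `DΨ^α(r) = (1/2π)[−(1/α)K₁(r/α) + 1/r]` of the kernel
`Ψ^α` is bounded on `(0,∞)` by `C/α`, with `C` an absolute constant independent of `α`. -/
theorem DPsi_alpha_bound :
    ∃ C > 0, ∀ α : ℝ, 0 < α → ∀ r : ℝ, 0 < r →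
      |(1 / (2 * Real.pi)) * (-(1 / α) * besselK1 (r / α) + 1 / r)| ≤ C / α := by
  refine ⟨1 / (2 * π), by positivity, fun α hα r hr => ?_⟩
  have hrα :
      -(1 / α) * besselK1 (r / α) + 1 / r = 1 / α * (1 / (r / α) - besselK1 (r / α)) := by
    field_simp
    ring
  rw [hrα, abs_mul, abs_mul, abs_of_pos (by positivity : 0 < 1 / (2 * π)),
    abs_of_pos (one_div_pos.2 hα)]
  calc 1 / (2 * π) * (1 / α * |1 / (r / α) - besselK1 (r / α)|)
      ≤ 1 / (2 * π) * (1 / α * 1) := by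
        gcongr
        exact abs_inv_sub_besselK1_le_one (div_pos hr hα)
    _ = 1 / (2 * π) / α := by ring
end

section
/- Let α > 0 and K^α(x) = (x^⊥/|x|) DΨ^α(|x|) be the smoothed Biot–Savart kernel on ℝ², with DΨ^α(r) = (1/2π)[−(1/α)K_1(r/α) + 1/r]. Then there exists an absolute constant C, independent of α, such that |∇K^α(x)| ≤ C/|x|² for all x ≠ 0. -/
/-!
Write `K^α(x) = φ(|x|) x^⊥` with `φ(r) = DΨ^α(r)/r`; since `x ↦ x^⊥` is an isometry,
`|∇K^α(x)| ≤ |φ(r)| + r |φ'(r)|` at `r = |x|`. Both terms are `O(1/r²)` as soon as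
`|DΨ^α(r)| ≤ 1/(2πr)` and `|(DΨ^α)'(r)| ≤ 1/(2πr²)`, and these follow from `0 ≤ K₁(s) ≤ 1/s` and
`0 ≤ -K₁'(s) ≤ 2/s²`; the substitution `s = r/α` leaves such homogeneous bounds unchanged, which is
why the constant does not depend on `α`.

For the Bessel bounds, split `cosh t = sinh t + e^{-t}`: the `sinh` part of the integrands has an
elementary antiderivative in `cosh t`, and the rest is at most `e^{-s} e^{-t}`. This gives
`K₁(s) ≤ (1 + s) e^{-s} / s` and `-K₁'(s) ≤ (1 + s)² e^{-s} / s²`.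
-/

open MeasureTheory

/-- `DΨ^α(r) = (1/2π)[−(1/α)K₁(r/α) + 1/r]`. -/
noncomputable def DPsi (α r : ℝ) : ℝ :=
  (1 / (2 * Real.pi)) * (-(1 / α) * besselK1 (r / α) + 1 / r)

/-- Rotation by `π/2`: `x^⊥ = (−x₂, x₁)` in `ℝ²`. -/
noncomputable def perp (z : EuclideanSpace ℝ (Fin 2)) : EuclideanSpace ℝ (Fin 2) :=
  EuclideanSpace.single 0 (-(z 1)) + EuclideanSpace.single 1 (z 0)

/-- The smoothed Biot–Savart kernel `K^α(x) = (x^⊥/|x|) DΨ^α(|x|)`. -/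
noncomputable def smoothedKernel (α : ℝ) (x : EuclideanSpace ℝ (Fin 2)) :
    EuclideanSpace ℝ (Fin 2) :=
  (DPsi α ‖x‖ / ‖x‖) • perp x

open Set Filter Topology Real

section ImproperComparison

variable {f g g' : ℝ → ℝ} {a l : ℝ}

theorem integrableOn_Ioi_of_le_deriv (hderiv : ∀ t ∈ Ici a, HasDerivAt g (g' t) t)
    (hg : Tendsto g atTop (𝓝 l)) (hf : AEStronglyMeasurable f (volume.restrict (Ioi a)))
    (hf0 : ∀ t ∈ Ioi a, 0 ≤ f t) (hfg : ∀ t ∈ Ioi a, f t ≤ g' t) :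
    IntegrableOn f (Ioi a) := by
  have hg' := integrableOn_Ioi_deriv_of_nonneg' hderiv (fun t ht ↦ (hf0 t ht).trans (hfg t ht)) hg
  refine hg'.mono' hf ?_
  filter_upwards [ae_restrict_mem measurableSet_Ioi] with t ht
  rw [norm_of_nonneg (hf0 t ht)]
  exact hfg t ht

theorem setIntegral_Ioi_le_of_le_deriv (hderiv : ∀ t ∈ Ici a, HasDerivAt g (g' t) t)
    (hg : Tendsto g atTop (𝓝 l)) (hf : AEStronglyMeasurable f (volume.restrict (Ioi a)))
    (hf0 : ∀ t ∈ Ioi a, 0 ≤ f t) (hfg : ∀ t ∈ Ioi a, f t ≤ g' t) :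
    ∫ t in Ioi a, f t ≤ l - g a := by
  have hg'0 : ∀ t ∈ Ioi a, 0 ≤ g' t := fun t ht ↦ (hf0 t ht).trans (hfg t ht)
  rw [← integral_Ioi_of_hasDerivAt_of_nonneg' hderiv hg'0 hg]
  exact setIntegral_mono_on (integrableOn_Ioi_of_le_deriv hderiv hg hf hf0 hfg)
    (integrableOn_Ioi_deriv_of_nonneg' hderiv hg'0 hg) measurableSet_Ioi hfg

end ImproperComparison

noncomputable def expCoshPrimitive (r a b t : ℝ) : ℝ :=
  -(exp (-r * cosh t) * (a * cosh t + b) + exp (-r) * exp (-t))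

theorem hasDerivAt_expCoshPrimitive (r a b t : ℝ) :
    HasDerivAt (expCoshPrimitive r a b)
      (exp (-r * cosh t) * sinh t * (r * (a * cosh t + b) - a) + exp (-r) * exp (-t)) t := by
  have hc := hasDerivAt_cosh t
  have he := ((hc.const_mul (-r)).exp).mul ((hc.const_mul a).add_const b)
  have hne := ((hasDerivAt_neg t).exp).const_mul (exp (-r))
  refine ((he.add hne).neg).congr_deriv ?_
  ring

theorem tendsto_cosh_atTop : Tendsto cosh atTop atTop := by
  refine tendsto_atTop_mono (fun t ↦ ?_) (tendsto_exp_atTop.atTop_div_const two_pos)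
  rw [cosh_eq]
  linarith [exp_pos (-t)]

theorem tendsto_expCoshPrimitive {r : ℝ} (hr : 0 < r) (a b : ℝ) :
    Tendsto (expCoshPrimitive r a b) atTop (𝓝 0) := by
  have hdecay : Tendsto (fun u ↦ exp (-r * u) * (a * u + b)) atTop (𝓝 0) := by
    have h1 := tendsto_rpow_mul_exp_neg_mul_atTop_nhds_zero 1 r hr
    have h0 := tendsto_rpow_mul_exp_neg_mul_atTop_nhds_zero 0 r hr
    simp only [rpow_one, rpow_zero, one_mul] at h1 h0
    convert (h1.const_mul a).add (h0.const_mul b) using 2 <;> ring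
  have h := ((hdecay.comp tendsto_cosh_atTop).add
    (tendsto_exp_neg_atTop_nhds_zero.const_mul (exp (-r)))).neg
  simp only [mul_zero, add_zero, neg_zero] at h
  exact h

theorem expCoshPrimitive_zero (r a b : ℝ) :
    expCoshPrimitive r a b 0 = -(exp (-r) * (a + b + 1)) := by
  simp only [expCoshPrimitive, cosh_zero, mul_one, neg_zero, exp_zero]
  ring

theorem exp_neg_mul_cosh_mul_cosh_le {r : ℝ} (hr : 0 ≤ r) (t : ℝ) :
    exp (-r * cosh t) * cosh t ≤ exp (-r * cosh t) * sinh t + exp (-r) * exp (-t) := by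
  have hsplit : cosh t = sinh t + exp (-t) := by linarith [cosh_sub_sinh t]
  have hexp : exp (-r * cosh t) ≤ exp (-r) := exp_le_exp.2 (by nlinarith [one_le_cosh t])
  rw [hsplit, mul_add, ← hsplit]
  gcongr

theorem exp_neg_mul_cosh_mul_cosh_sq_le {r t : ℝ} (hr : 0 ≤ r) (ht : 0 ≤ t) :
    exp (-r * cosh t) * cosh t ^ 2 ≤
      exp (-r * cosh t) * sinh t * (cosh t + 1) + exp (-r) * exp (-t) := by
  have hsplit : cosh t ^ 2 = cosh t * sinh t + cosh t * exp (-t) := by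
    rw [sq, ← mul_add]; congr 1; linarith [cosh_sub_sinh t]
  have hdrop : cosh t * exp (-t) ≤ cosh t :=
    mul_le_of_le_one_right (cosh_pos t).le (exp_le_one_iff.2 (by linarith))
  have := exp_neg_mul_cosh_mul_cosh_le hr t
  calc exp (-r * cosh t) * cosh t ^ 2
      ≤ exp (-r * cosh t) * (cosh t * sinh t) + exp (-r * cosh t) * cosh t := by
        rw [hsplit, mul_add]; gcongr
    _ ≤ _ := by linarith

noncomputable def negDerivBesselK1 (r : ℝ) : ℝ :=
  ∫ t in Ioi (0 : ℝ), exp (-r * cosh t) * cosh t ^ 2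

section BesselBounds

variable {r : ℝ}

theorem integrableOn_exp_neg_mul_cosh_mul_cosh (hr : 0 < r) :
    IntegrableOn (fun t ↦ exp (-r * cosh t) * cosh t) (Ioi 0) :=
  integrableOn_Ioi_of_le_deriv (fun t _ ↦ hasDerivAt_expCoshPrimitive r 0 r⁻¹ t)
    (tendsto_expCoshPrimitive hr 0 r⁻¹) (by fun_prop) (fun t _ ↦ by positivity)
    fun t _ ↦ (exp_neg_mul_cosh_mul_cosh_le hr.le t).trans_eq (by field_simp; ring)

theorem besselK1_le_inv (hr : 0 < r) : besselK1 r ≤ r⁻¹ := by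
  have hbound := setIntegral_Ioi_le_of_le_deriv (a := 0)
    (fun t _ ↦ hasDerivAt_expCoshPrimitive r 0 r⁻¹ t) (tendsto_expCoshPrimitive hr 0 r⁻¹)
    (by fun_prop) (fun t _ ↦ by positivity)
    fun t _ ↦ (exp_neg_mul_cosh_mul_cosh_le hr.le t).trans_eq (by field_simp; ring)
  refine hbound.trans ?_
  rw [expCoshPrimitive_zero, zero_sub, neg_neg, zero_add, exp_neg, inv_mul_le_iff₀ (exp_pos r)]
  field_simp
  linarith [add_one_le_exp r]

theorem besselK1_nonneg : 0 ≤ besselK1 r :=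
  setIntegral_nonneg measurableSet_Ioi fun t _ ↦ by positivity

theorem integrableOn_exp_neg_mul_cosh_mul_cosh_sq (hr : 0 < r) :
    IntegrableOn (fun t ↦ exp (-r * cosh t) * cosh t ^ 2) (Ioi 0) :=
  integrableOn_Ioi_of_le_deriv (fun t _ ↦ hasDerivAt_expCoshPrimitive r r⁻¹ (r⁻¹ + r⁻¹ ^ 2) t)
    (tendsto_expCoshPrimitive hr _ _) (by fun_prop) (fun t _ ↦ by positivity)
    fun t ht ↦ (exp_neg_mul_cosh_mul_cosh_sq_le hr.le ht.le).trans_eq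
      (by field_simp; ring)

theorem negDerivBesselK1_le (hr : 0 < r) : negDerivBesselK1 r ≤ 2 / r ^ 2 := by
  have hbound := setIntegral_Ioi_le_of_le_deriv (a := 0)
    (fun t _ ↦ hasDerivAt_expCoshPrimitive r r⁻¹ (r⁻¹ + r⁻¹ ^ 2) t)
    (tendsto_expCoshPrimitive hr _ _) (by fun_prop) (fun t _ ↦ by positivity)
    fun t ht ↦ (exp_neg_mul_cosh_mul_cosh_sq_le hr.le ht.le).trans_eq
      (by field_simp; ring)
  refine hbound.trans ?_
  rw [expCoshPrimitive_zero, zero_sub, neg_neg, exp_neg, inv_mul_le_iff₀ (exp_pos r)]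
  field_simp
  nlinarith [quadratic_le_exp_of_nonneg hr.le]

theorem negDerivBesselK1_nonneg : 0 ≤ negDerivBesselK1 r :=
  setIntegral_nonneg measurableSet_Ioi fun t _ ↦ by positivity

theorem hasDerivAt_besselK1 (hr : 0 < r) : HasDerivAt besselK1 (-negDerivBesselK1 r) r := by
  have hball : Metric.ball r (r / 2) ∈ 𝓝 r := Metric.ball_mem_nhds r (half_pos hr)
  have hdom : ∀ᵐ t ∂volume.restrict (Ioi 0), ∀ s ∈ Metric.ball r (r / 2),
      ‖-(exp (-s * cosh t) * cosh t ^ 2)‖ ≤ exp (-(r / 2) * cosh t) * cosh t ^ 2 := by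
    refine Eventually.of_forall fun t s hs ↦ ?_
    rw [Metric.mem_ball, Real.dist_eq, abs_lt] at hs
    rw [norm_neg, norm_of_nonneg (by positivity)]
    gcongr
    nlinarith [one_le_cosh t]
  have hderiv : ∀ᵐ t ∂volume.restrict (Ioi 0), ∀ s ∈ Metric.ball r (r / 2),
      HasDerivAt (fun s ↦ exp (-s * cosh t) * cosh t) (-(exp (-s * cosh t) * cosh t ^ 2)) s :=
    Eventually.of_forall fun t s _ ↦
      ((((hasDerivAt_neg s).mul_const (cosh t)).exp).mul_const (cosh t)).congr_deriv (by ring)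
  have key := hasDerivAt_integral_of_dominated_loc_of_deriv_le (μ := volume.restrict (Ioi 0))
    (F := fun s t ↦ exp (-s * cosh t) * cosh t) hball
    (Eventually.of_forall fun s ↦ by fun_prop) (integrableOn_exp_neg_mul_cosh_mul_cosh hr)
    (by fun_prop) hdom (integrableOn_exp_neg_mul_cosh_mul_cosh_sq (half_pos hr)) hderiv
  rw [integral_neg] at key
  exact key.2

end BesselBounds

theorem norm_fderiv_radial_smul_le {E F : Type*} [NormedAddCommGroup E] [InnerProductSpace ℝ E]
    [NormedAddCommGroup F] [NormedSpace ℝ F] {φ : ℝ → ℝ} {φ' : ℝ} (P : E →L[ℝ] F) {x : E}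
    (hx : x ≠ 0) (hφ : HasDerivAt φ φ' ‖x‖) :
    ‖fderiv ℝ (fun y ↦ φ ‖y‖ • P y) x‖ ≤ |φ ‖x‖| * ‖P‖ + |φ'| * ‖P x‖ := by
  have hnorm : HasFDerivAt (‖·‖) (fderiv ℝ (‖·‖) x) x :=
    ((contDiffAt_norm ℝ hx).differentiableAt (n := 1) one_ne_zero).hasFDerivAt
  have hnorm_le : ‖fderiv ℝ (‖·‖) x‖ ≤ 1 := by
    simpa using norm_fderiv_le_of_lipschitz ℝ (x₀ := x) lipschitzWith_one_norm
  have hfield : HasFDerivAt (fun y ↦ φ ‖y‖ • P y)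
      (φ ‖x‖ • P + (φ' • fderiv ℝ (‖·‖) x).smulRight (P x)) x :=
    (hφ.comp_hasFDerivAt x hnorm).smul P.hasFDerivAt
  rw [hfield.fderiv]
  calc _ ≤ ‖φ ‖x‖ • P‖ + ‖(φ' • fderiv ℝ (‖·‖) x).smulRight (P x)‖ := norm_add_le _ _
    _ ≤ |φ ‖x‖| * ‖P‖ + |φ'| * 1 * ‖P x‖ := by
      rw [ContinuousLinearMap.norm_smulRight_apply, norm_smul, norm_smul, Real.norm_eq_abs,
        Real.norm_eq_abs]
      gcongr
    _ = _ := by rw [mul_one]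

theorem norm_perp (z : EuclideanSpace ℝ (Fin 2)) : ‖perp z‖ = ‖z‖ := by
  have h0 : perp z 0 = -z 1 := by simp [perp]
  have h1 : perp z 1 = z 0 := by simp [perp]
  rw [EuclideanSpace.norm_eq, EuclideanSpace.norm_eq, Fin.sum_univ_two, Fin.sum_univ_two, h0, h1,
    norm_neg, add_comm]

noncomputable def perpLinearIsometry : EuclideanSpace ℝ (Fin 2) →ₗᵢ[ℝ] EuclideanSpace ℝ (Fin 2) where
  toFun := perp
  map_add' x y := by ext i; fin_cases i <;> simp [perp, add_comm]
  map_smul' c x := by ext i; fin_cases i <;> simp [perp]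
  norm_map' := norm_perp

section SmoothedKernel

variable {α r : ℝ}

theorem inv_mul_besselK1_div_le (hα : 0 < α) (hr : 0 < r) : α⁻¹ * besselK1 (r / α) ≤ r⁻¹ := by
  calc α⁻¹ * besselK1 (r / α) ≤ α⁻¹ * (r / α)⁻¹ := by
        gcongr; exact besselK1_le_inv (div_pos hr hα)
    _ = r⁻¹ := by field_simp

theorem negDerivBesselK1_div_le (hα : 0 < α) (hr : 0 < r) :
    negDerivBesselK1 (r / α) / α ^ 2 ≤ 2 / r ^ 2 := by
  calc negDerivBesselK1 (r / α) / α ^ 2 ≤ 2 / (r / α) ^ 2 / α ^ 2 := by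
        gcongr; exact negDerivBesselK1_le (div_pos hr hα)
    _ = 2 / r ^ 2 := by field_simp

theorem abs_DPsi_le (hα : 0 < α) (hr : 0 < r) : |DPsi α r| ≤ 1 / (2 * π * r) := by
  have hK := inv_mul_besselK1_div_le hα hr
  have hK0 : 0 ≤ α⁻¹ * besselK1 (r / α) := mul_nonneg (inv_nonneg.2 hα.le) besselK1_nonneg
  have hDPsi : DPsi α r = (2 * π)⁻¹ * (r⁻¹ - α⁻¹ * besselK1 (r / α)) := by
    rw [DPsi]; ring
  rw [hDPsi, abs_mul, abs_of_pos (by positivity), abs_of_nonneg (by linarith)]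
  calc (2 * π)⁻¹ * (r⁻¹ - α⁻¹ * besselK1 (r / α)) ≤ (2 * π)⁻¹ * r⁻¹ := by gcongr; linarith
    _ = 1 / (2 * π * r) := by rw [one_div, mul_inv (2 * π) r]

theorem hasDerivAt_DPsi (hα : 0 < α) (hr : 0 < r) :
    HasDerivAt (DPsi α) ((2 * π)⁻¹ * (negDerivBesselK1 (r / α) / α ^ 2 - (r ^ 2)⁻¹)) r := by
  have hK : HasDerivAt (fun s ↦ besselK1 (s / α)) (-negDerivBesselK1 (r / α) * (1 / α)) r :=
    (hasDerivAt_besselK1 (div_pos hr hα)).comp (h := fun s ↦ s / α) r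
      ((hasDerivAt_id' r).div_const α)
  have hDPsi : DPsi α = fun s ↦ 1 / (2 * π) * (-(1 / α) * besselK1 (s / α) + s⁻¹) := by
    funext s; simp only [DPsi, one_div]
  rw [hDPsi]
  refine (((hK.const_mul _).add (hasDerivAt_inv hr.ne')).const_mul _).congr_deriv ?_
  field_simp
  ring

theorem exists_hasDerivAt_DPsi_div (hα : 0 < α) (hr : 0 < r) :
    ∃ d, HasDerivAt (fun s ↦ DPsi α s / s) d r ∧ |d| * r ≤ 1 / (π * r ^ 2) := by
  set D' := (2 * π)⁻¹ * (negDerivBesselK1 (r / α) / α ^ 2 - (r ^ 2)⁻¹)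
  have hD' : |D'| ≤ 1 / (2 * π * r ^ 2) := by
    have hJ := negDerivBesselK1_div_le hα hr
    have hJ0 : 0 ≤ negDerivBesselK1 (r / α) / α ^ 2 := by
      have := negDerivBesselK1_nonneg (r := r / α)
      positivity
    rw [abs_mul, abs_of_pos (by positivity), one_div, mul_inv (2 * π)]
    gcongr
    rw [abs_le]
    constructor <;> linarith [show 2 / r ^ 2 = 2 * (r ^ 2)⁻¹ by ring]
  have hD := abs_DPsi_le hα hr
  refine ⟨_, (hasDerivAt_DPsi hα hr).div (hasDerivAt_id' r) hr.ne', ?_⟩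
  calc |(D' * r - DPsi α r * 1) / r ^ 2| * r = |D' * r - DPsi α r| / r := by
        rw [abs_div, abs_of_pos (pow_pos hr 2), mul_one]
        field_simp
    _ ≤ (|D'| * r + |DPsi α r|) / r := by
        gcongr
        simpa [abs_mul, abs_of_pos hr] using abs_sub (D' * r) (DPsi α r)
    _ ≤ (1 / (2 * π * r ^ 2) * r + 1 / (2 * π * r)) / r := by gcongr
    _ = 1 / (π * r ^ 2) := by field_simp; ring

theorem norm_fderiv_smoothedKernel_le (hα : 0 < α) {x : EuclideanSpace ℝ (Fin 2)} (hx : x ≠ 0) :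
    ‖fderiv ℝ (smoothedKernel α) x‖ ≤ 3 / (2 * π * ‖x‖ ^ 2) := by
  have hr : 0 < ‖x‖ := norm_pos_iff.2 hx
  obtain ⟨d, hd, hdb⟩ := exists_hasDerivAt_DPsi_div hα hr
  have hprofile : |DPsi α ‖x‖ / ‖x‖| ≤ 1 / (2 * π * ‖x‖ ^ 2) := by
    rw [abs_div, abs_of_pos hr, div_le_iff₀ hr]
    exact (abs_DPsi_le hα hr).trans_eq (by field_simp)
  have hK : smoothedKernel α =
      fun y ↦ (DPsi α ‖y‖ / ‖y‖) • perpLinearIsometry.toContinuousLinearMap y := rfl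
  rw [hK]
  calc _
      ≤ |DPsi α ‖x‖ / ‖x‖| * ‖perpLinearIsometry.toContinuousLinearMap‖
        + |d| * ‖perpLinearIsometry x‖ :=
        norm_fderiv_radial_smul_le (φ := fun s ↦ DPsi α s / s) _ hx hd
    _ ≤ 1 / (2 * π * ‖x‖ ^ 2) * 1 + 1 / (π * ‖x‖ ^ 2) := by
        rw [LinearIsometry.norm_map]
        gcongr
        exact perpLinearIsometry.norm_toContinuousLinearMap_le
    _ = 3 / (2 * π * ‖x‖ ^ 2) := by field_simp; ring

end SmoothedKernel

/-- `|∇K^α(x)| ≤ C/|x|²` for all `x ≠ 0`, with `C` an absolute constant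
independent of `α`. -/
theorem smoothed_kernel_gradient_bound :
    ∃ C > 0, ∀ α : ℝ, 0 < α → ∀ x : EuclideanSpace ℝ (Fin 2), x ≠ 0 →
      ‖fderiv ℝ (smoothedKernel α) x‖ ≤ C / ‖x‖ ^ 2 :=
  ⟨3 / (2 * π), by positivity, fun _ hα _ hx ↦
    (norm_fderiv_smoothedKernel_le hα hx).trans_eq (div_div _ _ _).symm⟩
end
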